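/- Let m ≥ 1, n ≥ 0 and 0 ≤ l < 2m be integers with N := 2nm + l ≥ 1. Then the Chebyshev norm of E_m of degree N is given by the weighted one-dimensional extremal problem t_N(E_m) = 2^{n + l/(2m)} · inf{ sup_{x ∈ [−1,1]} (1 + x)^{l/(2m)} |Q(x)| : Q ∈ ℝ[X] monic of degree n }. -/

import Mathlib

/-!
On `E_m` one has `z ^ (2m) = |z| ^ (2m) ∈ [0, 4]`, so for `P = z ^ l R(z ^ (2m))` with `R` real,
`|P(z)| = |z| ^ l |R(|z| ^ (2m))|`; the substitution `x = |z| ^ (2m) / 2 - 1`,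
`R(y) = 2 ^ n Q(y / 2 - 1)` turns this into `2 ^ (n + l/(2m)) (1 + x) ^ (l/(2m)) |Q(x)|`, and
`|z|` runs over all of `[0, 2 ^ (1/m)]` as `z` runs over `E_m`.
Conversely, averaging `ζ ^ (-l k) P(ζ ^ k z)` over the `2m`-th roots of unity `ζ ^ k`, under
which `E_m` is invariant, extracts from any monic `P` of degree `N` its part `z ^ l S(z ^ (2m))`
without increasing the supremum on `E_m`; on the positive real axis, replacing `S` by the real
parts of its coefficients only decreases the modulus.
-/

/-- The `n`-th Chebyshev norm of a set `E ⊆ ℂ`: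
`t_n(E) = inf { sup_{z ∈ E} |P(z)| : P monic of degree n }`. -/
noncomputable def chebNorm (E : Set ℂ) (n : ℕ) : ℝ :=
  sInf { r : ℝ | ∃ P : Polynomial ℂ, P.Monic ∧ P.natDegree = n ∧
    r = ⨆ z ∈ E, ‖P.eval z‖ }

/-- The star `E_m = { z ∈ ℂ : z^m ∈ [-2, 2] }`. -/
def Estar (m : ℕ) : Set ℂ := { z : ℂ | ∃ x ∈ Set.Icc (-2 : ℝ) 2, (x : ℂ) = z ^ m }

open Finset Polynomial

section Suprema

variable {α β : Type*} {E : Set α} {F : Set β} {f : α → ℝ} {g : β → ℝ}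

lemma biSup_nonneg (hf0 : ∀ x ∈ E, 0 ≤ f x) : 0 ≤ ⨆ x ∈ E, f x :=
  Real.iSup_nonneg fun x => Real.iSup_nonneg fun hx => hf0 x hx

lemma le_biSup_of_bddAbove (hf : BddAbove (f '' E)) (hf0 : ∀ x ∈ E, 0 ≤ f x) {x : α}
    (hx : x ∈ E) : f x ≤ ⨆ y ∈ E, f y := by
  obtain ⟨B, hB⟩ := hf
  have hbdd : BddAbove (Set.range fun y => ⨆ _ : y ∈ E, f y) := ⟨B, by
    rintro _ ⟨y, rfl⟩
    exact Real.iSup_le (fun hy => hB ⟨y, hy, rfl⟩) ((hf0 x hx).trans (hB ⟨x, hx, rfl⟩))⟩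
  exact le_ciSup_of_le hbdd x (ciSup_pos (f := fun _ => f x) hx).ge

lemma biSup_le_biSup_of_forall_exists_le (hg : BddAbove (g '' F)) (hg0 : ∀ y ∈ F, 0 ≤ g y)
    (h : ∀ x ∈ E, ∃ y ∈ F, f x ≤ g y) : ⨆ x ∈ E, f x ≤ ⨆ y ∈ F, g y := by
  refine Real.iSup_le (fun x => Real.iSup_le (fun hx => ?_) (biSup_nonneg hg0)) (biSup_nonneg hg0)
  obtain ⟨y, hy, hxy⟩ := h x hx
  exact hxy.trans (le_biSup_of_bddAbove hg hg0 hy)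

lemma mul_biSup_of_nonneg {c : ℝ} (hc : 0 ≤ c) : c * ⨆ x ∈ E, f x = ⨆ x ∈ E, c * f x := by
  simp only [Real.mul_iSup_of_nonneg hc]

end Suprema

lemma csInf_eq_of_subset_of_forall_exists_le {γ : Type*} [ConditionallyCompleteLattice γ]
    {S T : Set γ} (hS : BddBelow S) (hT : T.Nonempty) (hTS : T ⊆ S)
    (h : ∀ s ∈ S, ∃ t ∈ T, t ≤ s) : sInf S = sInf T := by
  refine le_antisymm (csInf_le_csInf hS hT hTS) (le_csInf (hT.mono hTS) fun s hs => ?_)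
  obtain ⟨t, ht, hts⟩ := h s hs
  exact (csInf_le (hS.mono hTS) ht).trans hts

lemma Finset.sum_range_mul {M : Type*} [AddCommMonoid M] (f : ℕ → M) (n d : ℕ) :
    ∑ i ∈ range (n * d), f i = ∑ j ∈ range n, ∑ r ∈ range d, f (j * d + r) := by
  induction n with
  | zero => simp
  | succ n ih => rw [Nat.succ_mul, sum_range_add, ih, sum_range_succ]

lemma IsPrimitiveRoot.sum_pow_pow_eq_ite {R : Type*} [CommRing R] [IsDomain R] {ζ : R} {d : ℕ}
    (hζ : IsPrimitiveRoot ζ d) (j : ℕ) :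
    ∑ k ∈ range d, (ζ ^ j) ^ k = if d ∣ j then (d : R) else 0 := by
  split_ifs with h
  · simp [(hζ.pow_eq_one_iff_dvd j).2 h]
  · have hne : ζ ^ j ≠ 1 := fun h1 => h ((hζ.pow_eq_one_iff_dvd j).1 h1)
    refine eq_zero_of_ne_zero_of_mul_left_eq_zero (sub_ne_zero.2 hne.symm) ?_
    rw [mul_neg_geom_sum, ← pow_mul, mul_comm, pow_mul, hζ.pow_eq_one, one_pow, sub_self]

lemma IsPrimitiveRoot.sum_pow_mul_eval_mul {R : Type*} [CommRing R] [IsDomain R] {ζ : R}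
    {d l n : ℕ} (hζ : IsPrimitiveRoot ζ d) (hl : l < d) (P : R[X])
    (hP : P.natDegree < (n + 1) * d) (z : R) :
    ∑ k ∈ range d, (ζ ^ (d - l)) ^ k * P.eval (ζ ^ k * z)
      = d * ∑ j ∈ range (n + 1), P.coeff (j * d + l) * z ^ (j * d + l) := by
  have hterm : ∀ k j r, (ζ ^ (d - l)) ^ k * (P.coeff (j * d + r) * (ζ ^ k * z) ^ (j * d + r))
      = P.coeff (j * d + r) * z ^ (j * d + r) * (ζ ^ (d - l + r)) ^ k := by
    intro k j r
    have hone : (ζ ^ k) ^ (j * d) = 1 := by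
      rw [← pow_mul, ← mul_assoc, mul_comm, pow_mul, hζ.pow_eq_one, one_pow]
    rw [mul_pow, pow_add, hone, one_mul]
    ring
  have hdvd : ∀ r ∈ range d, d ∣ d - l + r ↔ l = r := by
    intro r hr
    rw [mem_range] at hr
    constructor
    · intro h
      have := Nat.eq_of_dvd_of_lt_two_mul (by omega) h (by omega)
      omega
    · rintro rfl
      exact ⟨1, by omega⟩
  simp_rw [eval_eq_sum_range' hP, sum_range_mul, mul_sum, hterm]
  rw [sum_comm]
  refine sum_congr rfl fun j _ => ?_
  rw [sum_comm]
  simp_rw [← mul_sum, hζ.sum_pow_pow_eq_ite]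
  rw [sum_congr rfl fun r hr => by rw [if_congr (hdvd r hr) rfl rfl]]
  simp [mul_comm, hl]

lemma IsPrimitiveRoot.exists_norm_sum_coeff_le {ζ : ℂ} {d l n : ℕ} (hζ : IsPrimitiveRoot ζ d)
    (hl : l < d) (P : ℂ[X]) (hP : P.natDegree < (n + 1) * d) (z : ℂ) :
    ∃ k ∈ range d,
      ‖∑ j ∈ range (n + 1), P.coeff (j * d + l) * z ^ (j * d + l)‖ ≤ ‖P.eval (ζ ^ k * z)‖ := by
  have hζ1 : ‖ζ‖ = 1 := hζ.norm'_eq_one (by omega)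
  refine exists_le_of_sum_le (nonempty_range_iff.2 (by omega)) ?_
  calc ∑ _k ∈ range d, ‖∑ j ∈ range (n + 1), P.coeff (j * d + l) * z ^ (j * d + l)‖
      = ‖∑ k ∈ range d, (ζ ^ (d - l)) ^ k * P.eval (ζ ^ k * z)‖ := by
        rw [hζ.sum_pow_mul_eval_mul hl P hP, sum_const, card_range, nsmul_eq_mul, norm_mul,
          Complex.norm_natCast]
    _ ≤ ∑ k ∈ range d, ‖P.eval (ζ ^ k * z)‖ := by
        refine (norm_sum_le _ _).trans (sum_le_sum fun k _ => ?_)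
        rw [norm_mul, norm_pow, norm_pow, hζ1, one_pow, one_pow, one_mul]

section Star

variable {m : ℕ} {z : ℂ}

lemma norm_pow_le_two_of_mem_Estar (hz : z ∈ Estar m) : ‖z‖ ^ m ≤ 2 := by
  obtain ⟨t, ht, htz⟩ := hz
  rw [← norm_pow, ← htz, Complex.norm_real, Real.norm_eq_abs]
  exact abs_le.2 ht

lemma norm_pow_two_mul_le_four_of_mem_Estar (hz : z ∈ Estar m) : ‖z‖ ^ (2 * m) ≤ 4 := by
  rw [mul_comm, pow_mul]
  nlinarith [norm_pow_le_two_of_mem_Estar hz, pow_nonneg (norm_nonneg z) m]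

lemma isCompact_Estar (hm : m ≠ 0) : IsCompact (Estar m) := by
  refine Metric.isCompact_of_isClosed_isBounded ?_
    ((Metric.isBounded_closedBall (x := 0) (r := 2)).subset ?_)
  · have hpre : Estar m = (· ^ m) ⁻¹' ((↑) '' Set.Icc (-2 : ℝ) 2) := by
      ext z
      simp [Estar]
    rw [hpre]
    exact ((isCompact_Icc.image Complex.continuous_ofReal).isClosed).preimage (continuous_pow m)
  · intro z hz
    rw [mem_closedBall_zero_iff]
    by_contra! h
    have := norm_pow_le_two_of_mem_Estar hz
    nlinarith [le_self_pow₀ (by linarith : (1 : ℝ) ≤ ‖z‖) hm]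

lemma pow_two_mul_eq_of_mem_Estar (hz : z ∈ Estar m) :
    z ^ (2 * m) = ((‖z‖ ^ (2 * m) : ℝ) : ℂ) := by
  obtain ⟨t, -, htz⟩ := hz
  have hnorm : ‖z‖ ^ m = |t| := by rw [← norm_pow, ← htz, Complex.norm_real, Real.norm_eq_abs]
  rw [mul_comm, pow_mul, pow_mul, hnorm, ← htz, sq_abs]
  push_cast
  ring

lemma mul_mem_Estar {ω : ℂ} (hω : ω ^ (2 * m) = 1) (hz : z ∈ Estar m) : ω * z ∈ Estar m := by
  obtain ⟨t, ht, htz⟩ := hz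
  have hωm : ω ^ m = 1 ∨ ω ^ m = -1 := sq_eq_one_iff.1 (by rw [← pow_mul, mul_comm, hω])
  rcases hωm with h | h
  · exact ⟨t, ht, by rw [mul_pow, h, one_mul, htz]⟩
  · refine ⟨-t, ⟨by linarith [ht.2], by linarith [ht.1]⟩, ?_⟩
    rw [mul_pow, h, ← htz]
    push_cast
    ring

lemma bddAbove_norm_eval_Estar (hm : m ≠ 0) (P : ℂ[X]) :
    BddAbove ((fun z => ‖P.eval z‖) '' Estar m) :=
  (isCompact_Estar hm).bddAbove_image P.continuous.norm.continuousOn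

lemma exists_ofReal_mem_Estar (hm : m ≠ 0) {x : ℝ} (hx : x ∈ Set.Icc (-1 : ℝ) 1) :
    ∃ u : ℝ, 0 ≤ u ∧ (u : ℂ) ∈ Estar m ∧ u ^ (2 * m) / 2 - 1 = x := by
  have hy0 : 0 ≤ 2 * (1 + x) := by linarith [hx.1]
  set u := (2 * (1 + x)) ^ ((2 * m : ℕ)⁻¹ : ℝ)
  have hu0 : 0 ≤ u := Real.rpow_nonneg hy0 _
  have hu : u ^ (2 * m) = 2 * (1 + x) := Real.rpow_inv_natCast_pow hy0 (by omega)
  refine ⟨u, hu0, ⟨u ^ m, ⟨?_, ?_⟩, by push_cast; rfl⟩, by rw [hu]; ring⟩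
  · linarith [pow_nonneg hu0 m]
  · nlinarith [pow_nonneg hu0 m, show (u ^ m) ^ 2 = 2 * (1 + x) by rw [← pow_mul, mul_comm, hu],
      hx.2]

end Star

section AffineRescaling

variable {n : ℕ}

lemma exists_monic_eval_eq_two_pow_mul_eval {Q : ℝ[X]} (hQ : Q.Monic)
    (hdeg : Q.natDegree = n) :
    ∃ R : ℝ[X], R.Monic ∧ R.natDegree = n ∧ ∀ y, R.eval y = 2 ^ n * Q.eval (y / 2 - 1) := by
  have hQ' : (Q.comp (X - C 1)).natDegree = n := by
    rw [natDegree_comp, natDegree_X_sub_C, mul_one, hdeg]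
  refine ⟨(Q.comp (X - C 1)).scaleRoots 2, (monic_scaleRoots_iff 2).2 (hQ.comp_X_sub_C 1),
    by rw [natDegree_scaleRoots, hQ'], fun y => ?_⟩
  have := scaleRoots_eval_mul (Q.comp (X - C 1)) (y / 2) 2
  rw [mul_div_cancel₀ y two_ne_zero, hQ'] at this
  rw [this, eval_comp, eval_sub, eval_X, eval_C]

lemma exists_monic_two_pow_mul_eval_eq_eval {R : ℝ[X]} (hR : R.Monic)
    (hdeg : R.natDegree = n) :
    ∃ Q : ℝ[X], Q.Monic ∧ Q.natDegree = n ∧ ∀ y, R.eval y = 2 ^ n * Q.eval (y / 2 - 1) := by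
  refine ⟨(R.scaleRoots 2⁻¹).comp (X + C 1), ((monic_scaleRoots_iff _).2 hR).comp_X_add_C 1,
    by rw [natDegree_comp, natDegree_X_add_C, mul_one, natDegree_scaleRoots, hdeg], fun y => ?_⟩
  have := scaleRoots_eval_mul R y 2⁻¹
  rw [hdeg] at this
  simp only [eval_comp, eval_add, eval_X, eval_C, sub_add_cancel, div_eq_inv_mul, this]
  rw [inv_pow, mul_inv_cancel_left₀ (pow_ne_zero _ two_ne_zero)]

end AffineRescaling

lemma exists_monic_eval_eq_re_sum (a : ℕ → ℂ) (n : ℕ) (ha : a n = 1) :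
    ∃ R : ℝ[X], R.Monic ∧ R.natDegree = n ∧
      ∀ y : ℝ, R.eval y = (∑ j ∈ range (n + 1), a j * (y : ℂ) ^ j).re := by
  have hlow := degree_sum_fin_lt (fun j : Fin n => (a j).re)
  refine ⟨X ^ n + ∑ j : Fin n, C (a j).re * X ^ (j : ℕ), monic_X_pow_add hlow, ?_, fun y => ?_⟩
  · rw [natDegree_add_eq_left_of_degree_lt (by rwa [degree_X_pow]), natDegree_X_pow]
  · rw [sum_range_succ, ha, Complex.add_re, Complex.re_sum, add_comm]
    simp [eval_finsetSum, Fin.sum_univ_eq_sum_range (fun j => (a j).re * y ^ j),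
      ← Complex.ofReal_pow]

lemma two_rpow_mul_one_add_rpow {m l n : ℕ} (hm : m ≠ 0) {u : ℝ} (hu : 0 ≤ u) :
    (2 : ℝ) ^ ((n : ℝ) + l / (2 * m)) * (1 + (u ^ (2 * m) / 2 - 1)) ^ ((l : ℝ) / (2 * m))
      = 2 ^ n * u ^ l := by
  have hd : ((2 * m : ℕ) : ℝ) = 2 * m := by push_cast; ring
  have hroot : (u ^ (2 * m)) ^ ((l : ℝ) / (2 * m)) = u ^ l := by
    rw [← hd, div_eq_inv_mul, Real.rpow_mul (pow_nonneg hu _),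
      Real.pow_rpow_inv_natCast hu (by omega), Real.rpow_natCast]
  rw [add_sub_cancel, Real.rpow_add two_pos, Real.rpow_natCast, mul_assoc,
    ← Real.mul_rpow zero_le_two (by positivity), mul_div_cancel₀ _ two_ne_zero, hroot]

lemma two_rpow_mul_weight_eq {m l n : ℕ} (hm : m ≠ 0) {Q R : ℝ[X]}
    (hQR : ∀ y, R.eval y = 2 ^ n * Q.eval (y / 2 - 1)) {u : ℝ} (hu : 0 ≤ u) :
    (2 : ℝ) ^ ((n : ℝ) + l / (2 * m)) *
      ((1 + (u ^ (2 * m) / 2 - 1)) ^ ((l : ℝ) / (2 * m)) * |Q.eval (u ^ (2 * m) / 2 - 1)|)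
      = u ^ l * |R.eval (u ^ (2 * m))| := by
  rw [← mul_assoc, two_rpow_mul_one_add_rpow hm hu, hQR, abs_mul, abs_pow, abs_two]
  ring

lemma norm_eval_map_X_pow_mul_expand_of_mem_Estar {m l : ℕ} {z : ℂ} (hz : z ∈ Estar m)
    (R : ℝ[X]) :
    ‖((X ^ l * expand ℝ (2 * m) R).map (algebraMap ℝ ℂ)).eval z‖
      = ‖z‖ ^ l * |R.eval (‖z‖ ^ (2 * m))| := by
  rw [Polynomial.map_mul, Polynomial.map_pow, map_X, map_expand, eval_mul, eval_pow, eval_X,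
    expand_eval, pow_two_mul_eq_of_mem_Estar hz, eval_map_algebraMap, ← Complex.coe_algebraMap,
    aeval_algebraMap_apply_eq_algebraMap_eval, Complex.coe_algebraMap, norm_mul, norm_pow,
    Complex.norm_real, Real.norm_eq_abs]

lemma continuous_one_add_rpow_mul_abs_eval {α : ℝ} (hα : 0 ≤ α) (Q : ℝ[X]) :
    Continuous fun x : ℝ => (1 + x) ^ α * |Q.eval x| :=
  ((Real.continuous_rpow_const hα).comp (continuous_const.add continuous_id)).mul
    Q.continuous.abs

lemma exists_monic_biSup_Estar_eq_weighted {m l n : ℕ} (hm : m ≠ 0) {Q : ℝ[X]} (hQ : Q.Monic)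
    (hdeg : Q.natDegree = n) :
    ∃ P : ℂ[X], P.Monic ∧ P.natDegree = 2 * n * m + l ∧
      ⨆ z ∈ Estar m, ‖P.eval z‖ = (2 : ℝ) ^ ((n : ℝ) + l / (2 * m)) *
        ⨆ x ∈ Set.Icc (-1 : ℝ) 1, (1 + x) ^ ((l : ℝ) / (2 * m)) * |Q.eval x| := by
  obtain ⟨R, hR, hRdeg, hQR⟩ := exists_monic_eval_eq_two_pow_mul_eval hQ hdeg
  have hF : (X ^ l * expand ℝ (2 * m) R).Monic := (monic_X_pow l).mul (hR.expand (by omega))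
  have hc : (0 : ℝ) ≤ 2 ^ ((n : ℝ) + l / (2 * m)) := by positivity
  refine ⟨(X ^ l * expand ℝ (2 * m) R).map (algebraMap ℝ ℂ), hF.map _, ?_, le_antisymm ?_ ?_⟩
  · rw [hF.natDegree_map, (monic_X_pow l).natDegree_mul (hR.expand (by omega)), natDegree_X_pow,
      natDegree_expand, hRdeg]
    ring
  · rw [mul_biSup_of_nonneg hc]
    have hw := continuous_one_add_rpow_mul_abs_eval (α := (l : ℝ) / (2 * m)) (by positivity) Q
    refine biSup_le_biSup_of_forall_exists_le
      (isCompact_Icc.bddAbove_image (continuous_const.mul hw).continuousOn)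
      (fun x hx => mul_nonneg hc (mul_nonneg (Real.rpow_nonneg (by linarith [hx.1]) _)
        (abs_nonneg _))) fun z hz => ⟨‖z‖ ^ (2 * m) / 2 - 1, ⟨?_, ?_⟩, ?_⟩
    · linarith [pow_nonneg (norm_nonneg z) (2 * m)]
    · linarith [norm_pow_two_mul_le_four_of_mem_Estar hz]
    · rw [two_rpow_mul_weight_eq hm hQR (norm_nonneg z),
        norm_eval_map_X_pow_mul_expand_of_mem_Estar hz]
  · rw [mul_biSup_of_nonneg hc]
    refine biSup_le_biSup_of_forall_exists_le (bddAbove_norm_eval_Estar hm _)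
      (fun _ _ => norm_nonneg _) fun x hx => ?_
    obtain ⟨u, hu0, hu, rfl⟩ := exists_ofReal_mem_Estar hm hx
    refine ⟨u, hu, le_of_eq ?_⟩
    rw [two_rpow_mul_weight_eq hm hQR hu0, norm_eval_map_X_pow_mul_expand_of_mem_Estar hu,
      Complex.norm_real, Real.norm_of_nonneg hu0]

lemma exists_monic_weighted_le_biSup_Estar {m l n : ℕ} (hm : m ≠ 0) (hl : l < 2 * m) {P : ℂ[X]}
    (hP : P.Monic) (hdeg : P.natDegree = 2 * n * m + l) :
    ∃ Q : ℝ[X], Q.Monic ∧ Q.natDegree = n ∧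
      (2 : ℝ) ^ ((n : ℝ) + l / (2 * m)) *
        ⨆ x ∈ Set.Icc (-1 : ℝ) 1, (1 + x) ^ ((l : ℝ) / (2 * m)) * |Q.eval x|
        ≤ ⨆ z ∈ Estar m, ‖P.eval z‖ := by
  obtain ⟨ζ, hζ⟩ : ∃ ζ : ℂ, IsPrimitiveRoot ζ (2 * m) :=
    ⟨_, Complex.isPrimitiveRoot_exp (2 * m) (by omega)⟩
  have htop : n * (2 * m) + l = P.natDegree := by rw [hdeg]; ring
  obtain ⟨R, hR, hRdeg, hRe⟩ :=
    exists_monic_eval_eq_re_sum (fun j => P.coeff (j * (2 * m) + l)) n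
      (by rw [htop]; exact hP.coeff_natDegree)
  obtain ⟨Q, hQ, hQdeg, hQR⟩ := exists_monic_two_pow_mul_eval_eq_eval hR hRdeg
  refine ⟨Q, hQ, hQdeg, ?_⟩
  rw [mul_biSup_of_nonneg (by positivity)]
  refine biSup_le_biSup_of_forall_exists_le (bddAbove_norm_eval_Estar hm P)
    (fun _ _ => norm_nonneg _) fun x hx => ?_
  obtain ⟨u, hu0, hu, rfl⟩ := exists_ofReal_mem_Estar hm hx
  obtain ⟨k, -, hk⟩ := hζ.exists_norm_sum_coeff_le hl P (n := n) (by rw [hdeg]; nlinarith) u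
  have hζk : (ζ ^ k) ^ (2 * m) = 1 := by rw [pow_right_comm, hζ.pow_eq_one, one_pow]
  refine ⟨ζ ^ k * u, mul_mem_Estar hζk hu, ?_⟩
  rw [two_rpow_mul_weight_eq hm hQR hu0]
  calc u ^ l * |R.eval (u ^ (2 * m))|
      = |(∑ j ∈ range (n + 1), P.coeff (j * (2 * m) + l) * (u : ℂ) ^ (j * (2 * m) + l)).re| := by
        rw [← abs_of_nonneg (pow_nonneg hu0 l), ← abs_mul, hRe, ← Complex.re_ofReal_mul,
          mul_sum]
        congr 2
        refine sum_congr rfl fun j _ => ?_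
        push_cast
        ring
    _ ≤ _ := Complex.abs_re_le_norm _
    _ ≤ _ := hk

theorem chebNorm_Estar_eq_weighted_general (m n l : ℕ) (hm : 1 ≤ m) (hl : l < 2 * m)
    (N : ℕ) (hN : N = 2 * n * m + l) :
    chebNorm (Estar m) N = (2 : ℝ) ^ ((n : ℝ) + (l : ℝ) / (2 * (m : ℝ))) *
      sInf { r : ℝ | ∃ Q : Polynomial ℝ, Q.Monic ∧ Q.natDegree = n ∧
        r = ⨆ x ∈ Set.Icc (-1 : ℝ) 1,
              (1 + x) ^ ((l : ℝ) / (2 * (m : ℝ))) * |Q.eval x| } := by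
  subst hN
  have hm0 : m ≠ 0 := by omega
  have hc : (0 : ℝ) ≤ 2 ^ ((n : ℝ) + l / (2 * m)) := by positivity
  rw [chebNorm]
  refine Eq.trans ?_ (Real.sInf_smul_of_nonneg hc _)
  refine csInf_eq_of_subset_of_forall_exists_le ⟨0, ?_⟩
    (Set.smul_set_nonempty.2 ⟨_, X ^ n, monic_X_pow n, natDegree_X_pow n, rfl⟩) ?_ ?_
  · rintro _ ⟨P, -, -, rfl⟩
    exact biSup_nonneg fun _ _ => norm_nonneg _
  · rintro _ ⟨_, ⟨Q, hQ, hQdeg, rfl⟩, rfl⟩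
    obtain ⟨P, hP, hPdeg, hPQ⟩ := exists_monic_biSup_Estar_eq_weighted hm0 hQ hQdeg (l := l)
    exact ⟨P, hP, hPdeg, hPQ.symm⟩
  · rintro _ ⟨P, hP, hPdeg, rfl⟩
    obtain ⟨Q, hQ, hQdeg, hle⟩ := exists_monic_weighted_le_biSup_Estar hm0 hl hP hPdeg
    exact ⟨_, Set.smul_mem_smul_set ⟨Q, hQ, hQdeg, rfl⟩, hle⟩

/-- The Chebyshev problem on `E_m` of degree `N = 2nm + l` reduces to a weighted
Chebyshev problem on `[-1,1]` with weight `(1+x)^{l/(2m)}`. -/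
theorem chebNorm_Estar_eq_weighted (m n l : ℕ) (hm : 1 ≤ m) (hl : l < 2 * m)
    (N : ℕ) (hN : N = 2 * n * m + l) (hN1 : 1 ≤ N) :
    chebNorm (Estar m) N = (2 : ℝ) ^ ((n : ℝ) + (l : ℝ) / (2 * (m : ℝ))) *
      sInf { r : ℝ | ∃ Q : Polynomial ℝ, Q.Monic ∧ Q.natDegree = n ∧
        r = ⨆ x ∈ Set.Icc (-1 : ℝ) 1,
              (1 + x) ^ ((l : ℝ) / (2 * (m : ℝ))) * |Q.eval x| } :=
  chebNorm_Estar_eq_weighted_general m n l hm hl N hN
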